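/- arXiv:1603.07002 — 2 statements merged into one kernel-verified Lean document; each statement's English description precedes it below -/
import Mathlib

section
/- Let X be a topological space, A a C*-algebra, and f : X → A a continuous function such that f(x) has closed range for every x ∈ X, and let u(x) = 𝐮(f(x)). Then the set of points of X at which u is continuous is an open subset of X. -/
open scoped NNReal

variable {A : Type*} [NonUnitalCStarAlgebra A]

/-- The absolute value `|a| = (a*a)^{1/2}` of an element of a C*-algebra. -/
noncomputable def cstarAbs (a : A) : A := cfcₙ Real.sqrt (star a * a)

/-- An element `a` of a C*-algebra has closed range if the spectrum of `|a|`
omits an interval `(0, ε)` for some `ε > 0`. -/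
def HasClosedRange (a : A) : Prop :=
  ∃ ε > 0, ∀ x ∈ quasispectrum ℝ (cstarAbs a), x ∉ Set.Ioo 0 ε

/-- A choice of `ε > 0` witnessing that the spectrum of `|a|` omits `(0, ε)`
(junk value `1` if `a` does not have closed range). -/
noncomputable def crEps (a : A) : ℝ :=
  open Classical in if h : HasClosedRange a then h.choose else 1

/-- The partial isometry `𝐮 a` in the canonical polar decomposition of a closed
range element `a`, given by the explicit formula `𝐮 a = a * h (|a|)` where `h`
is a continuous function with `h 0 = 0` and `h t = t⁻¹` for `t ≥ ε`
(junk values when `a` does not have closed range). -/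
noncomputable def polarIso (a : A) : A :=
  a * cfcₙ (fun t : ℝ => t * ((max t (crEps a))⁻¹) ^ 2) (cstarAbs a)

/-!
Suppose `𝐮 ∘ f` is continuous at `x₀` and let `ε₀ = crEps (f x₀)`, so that
`ε₀ ‖𝐮 (f x₀) y‖ ≤ ‖f x₀ y‖` for all `y`. If `t > 0` lies in the spectrum of `|f x|`, test against
`c = cutoffInv t (|f x|)`: then `‖c‖ ≥ 1/t`, `‖f x c‖ ≤ 1`, and `𝐮 (f x)` is isometric on `c`.
Comparing the two sides forces `t ≥ ε₀ / 2` once `f x` and `𝐮 (f x)` are close to `f x₀` and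
`𝐮 (f x₀)`. With this uniform spectral gap `δ`, `𝐮 (f x) = f x · cutoffInv δ (|f x|)` near `x₀`,
which is continuous in `x` by continuity of the continuous functional calculus.
-/

noncomputable def cutoffInv (ε t : ℝ) : ℝ := t * (max t ε)⁻¹ ^ 2

section CutoffInv

variable {ε t : ℝ}

lemma continuous_cutoffInv (hε : 0 < ε) : Continuous (cutoffInv ε) :=
  continuous_id.mul <| ((continuous_id.max continuous_const).inv₀
    fun t => (hε.trans_le (le_max_right t ε)).ne').pow 2

@[simp] lemma cutoffInv_zero : cutoffInv ε 0 = 0 := by simp [cutoffInv]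

lemma cutoffInv_of_le (hε : 0 < ε) (h : ε ≤ t) : cutoffInv ε t = t⁻¹ := by
  have ht : t ≠ 0 := (hε.trans_le h).ne'
  rw [cutoffInv, max_eq_left h]
  field_simp

lemma abs_cutoffInv_le (hε : 0 < ε) (ht : 0 ≤ t) : |cutoffInv ε t| ≤ ε⁻¹ := by
  have hm : 0 < max t ε := hε.trans_le (le_max_right t ε)
  rw [cutoffInv, abs_of_nonneg (by positivity), inv_pow, ← div_eq_mul_inv,
    div_le_iff₀ (by positivity)]
  calc t = ε⁻¹ * (ε * t) := by field_simp
    _ ≤ ε⁻¹ * (max t ε * max t ε) := by gcongr <;> simp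
    _ = ε⁻¹ * max t ε ^ 2 := by ring

lemma abs_mul_cutoffInv_le_one (ht : 0 ≤ t) : |t * cutoffInv ε t| ≤ 1 := by
  rcases ht.eq_or_lt with rfl | ht
  · simp
  have hm : t ≤ max t ε := le_max_left t ε
  rw [cutoffInv, abs_of_nonneg (by positivity), ← mul_assoc, inv_pow, ← div_eq_mul_inv,
    div_le_one (by positivity)]
  nlinarith

end CutoffInv

section CStarAbs

lemma cstarAbs_eq_abs [PartialOrder A] [StarOrderedRing A] (a : A) : cstarAbs a = CFC.abs a :=
  (CFC.sqrt_eq_real_sqrt _ (star_mul_self_nonneg a)).symm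

lemma isSelfAdjoint_cstarAbs (a : A) : IsSelfAdjoint (cstarAbs a) := cfcₙ_predicate _ _

lemma cstarAbs_mul_self (a : A) : cstarAbs a * cstarAbs a = star a * a := by
  let _ := CStarAlgebra.spectralOrder A
  have := CStarAlgebra.spectralOrderedRing A
  exact cstarAbs_eq_abs a ▸ CFC.abs_mul_abs a

lemma nonneg_of_mem_quasispectrum_cstarAbs {a : A} {t : ℝ}
    (ht : t ∈ quasispectrum ℝ (cstarAbs a)) : 0 ≤ t := by
  let _ := CStarAlgebra.spectralOrder A
  have := CStarAlgebra.spectralOrderedRing A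
  exact quasispectrum_nonneg_of_nonneg _ (cstarAbs_eq_abs a ▸ CFC.abs_nonneg a) t ht

lemma norm_cstarAbs_mul (a y : A) : ‖cstarAbs a * y‖ = ‖a * y‖ := by
  have hsq : ‖cstarAbs a * y‖ * ‖cstarAbs a * y‖ = ‖a * y‖ * ‖a * y‖ := by
    rw [← CStarRing.norm_star_mul_self, ← CStarRing.norm_star_mul_self, star_mul, star_mul,
      (isSelfAdjoint_cstarAbs a).star_eq, mul_assoc, ← mul_assoc (cstarAbs a),
      cstarAbs_mul_self, mul_assoc, mul_assoc]
  exact (mul_self_inj (norm_nonneg _) (norm_nonneg _)).mp hsq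

lemma continuous_cstarAbs : Continuous (cstarAbs : A → A) :=
  Continuous.cfcₙ_of_mem_nhdsSet (s := Set.univ) Real.sqrt Filter.univ_mem
    (continuous_star.mul continuous_id) (fun a => IsSelfAdjoint.star_mul_self a)

lemma cstarAbs_mul_cfcₙ (a : A) {φ : ℝ → ℝ} (hφ : Continuous φ) (hφ0 : φ 0 = 0) :
    cstarAbs a * cfcₙ φ (cstarAbs a) = cfcₙ (fun t => t * φ t) (cstarAbs a) := by
  rw [cfcₙ_mul (fun t => t) φ _ (by fun_prop) rfl hφ.continuousOn hφ0,
    cfcₙ_id' ℝ _ (isSelfAdjoint_cstarAbs a)]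

lemma norm_mul_cfcₙ_cstarAbs_mul (a y : A) (φ : ℝ → ℝ) :
    ‖a * cfcₙ φ (cstarAbs a) * y‖ = ‖cfcₙ φ (cstarAbs a) * (cstarAbs a * y)‖ := by
  have hcomm : Commute (cstarAbs a) (cfcₙ φ (cstarAbs a)) := by
    simpa only [cfcₙ_id' ℝ (cstarAbs a) (isSelfAdjoint_cstarAbs a)] using
      cfcₙ_commute_cfcₙ (fun t => t) φ (cstarAbs a)
  rw [mul_assoc, ← norm_cstarAbs_mul, ← mul_assoc, hcomm.eq, mul_assoc]

end CStarAbs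

def SpectralGap (a : A) (δ : ℝ) : Prop :=
  ∀ t ∈ quasispectrum ℝ (cstarAbs a), t ∉ Set.Ioo 0 δ

section PolarIso

variable {a : A} {δ t : ℝ}

lemma SpectralGap.eq_zero_or_le (h : SpectralGap a δ) (ht : t ∈ quasispectrum ℝ (cstarAbs a)) :
    t = 0 ∨ δ ≤ t := by
  rcases (nonneg_of_mem_quasispectrum_cstarAbs ht).eq_or_lt with h0 | hpos
  · exact .inl h0.symm
  · exact .inr <| not_lt.mp fun hlt => h t ht ⟨hpos, hlt⟩

lemma crEps_pos (a : A) : 0 < crEps a := by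
  unfold crEps
  split_ifs with h
  exacts [h.choose_spec.1, one_pos]

lemma HasClosedRange.spectralGap_crEps (h : HasClosedRange a) : SpectralGap a (crEps a) := by
  rw [crEps, dif_pos h]
  exact h.choose_spec.2

lemma polarIso_eq (a : A) : polarIso a = a * cfcₙ (cutoffInv (crEps a)) (cstarAbs a) := rfl

lemma polarIso_eq_of_spectralGap (hcr : HasClosedRange a) (hδ : 0 < δ) (hgap : SpectralGap a δ) :
    polarIso a = a * cfcₙ (cutoffInv δ) (cstarAbs a) := by
  refine congrArg (a * ·) (cfcₙ_congr fun t ht => ?_)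
  rcases hgap.eq_zero_or_le ht with rfl | hδt
  · simp
  · obtain h0 | hεt := hcr.spectralGap_crEps.eq_zero_or_le ht
    · exact absurd h0 (hδ.trans_le hδt).ne'
    · exact (cutoffInv_of_le (crEps_pos a) hεt).trans (cutoffInv_of_le hδ hδt).symm

lemma crEps_mul_norm_polarIso_mul_le (a y : A) : crEps a * ‖polarIso a * y‖ ≤ ‖a * y‖ := by
  set ε := crEps a
  have hε : 0 < ε := crEps_pos a
  have hG : ‖cfcₙ (cutoffInv ε) (cstarAbs a)‖ ≤ ε⁻¹ :=
    norm_cfcₙ_le fun t ht => abs_cutoffInv_le hε (nonneg_of_mem_quasispectrum_cstarAbs ht)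
  calc ε * ‖polarIso a * y‖ = ε * ‖cfcₙ (cutoffInv ε) (cstarAbs a) * (cstarAbs a * y)‖ := by
        rw [polarIso_eq, norm_mul_cfcₙ_cstarAbs_mul]
    _ ≤ ε * (ε⁻¹ * ‖cstarAbs a * y‖) := by
        gcongr; exact (norm_mul_le _ _).trans (by gcongr)
    _ = ‖a * y‖ := by rw [← mul_assoc, mul_inv_cancel₀ hε.ne', one_mul, norm_cstarAbs_mul]

lemma norm_polarIso_mul_cfcₙ (hcr : HasClosedRange a) {φ : ℝ → ℝ} (hφ : Continuous φ)
    (hφ0 : φ 0 = 0) : ‖polarIso a * cfcₙ φ (cstarAbs a)‖ = ‖cfcₙ φ (cstarAbs a)‖ := by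
  have hε := crEps_pos a
  have hg := continuous_cutoffInv hε
  rw [polarIso_eq, norm_mul_cfcₙ_cstarAbs_mul, cstarAbs_mul_cfcₙ a hφ hφ0,
    ← cfcₙ_mul _ _ _ hg.continuousOn cutoffInv_zero (by fun_prop) (by simp [hφ0])]
  congr 1
  refine cfcₙ_congr fun t ht => ?_
  rcases hcr.spectralGap_crEps.eq_zero_or_le ht with rfl | hεt
  · simp [hφ0]
  · rw [cutoffInv_of_le hε hεt, ← mul_assoc, inv_mul_cancel₀ (hε.trans_le hεt).ne', one_mul]

/-- The positive part of the spectrum of `|a|` stays away from `0` as long as `a` and `𝐮 a` stay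
close to `a₀` and `𝐮 a₀`. -/
lemma crEps_mul_sub_le_of_mem_quasispectrum (hcr : HasClosedRange a) (a₀ : A)
    (ht : t ∈ quasispectrum ℝ (cstarAbs a)) (htpos : 0 < t) :
    crEps a₀ * (1 - ‖polarIso a - polarIso a₀‖) - ‖a - a₀‖ ≤ t := by
  set c := cfcₙ (cutoffInv t) (cstarAbs a)
  have hc : t⁻¹ ≤ ‖c‖ := by
    simpa [cutoffInv_of_le htpos le_rfl, abs_of_pos htpos] using
      norm_apply_le_norm_cfcₙ (cutoffInv t) (cstarAbs a) ht
        (continuous_cutoffInv htpos).continuousOn cutoffInv_zero (isSelfAdjoint_cstarAbs a)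
  have hc0 : 0 < ‖c‖ := (inv_pos.mpr htpos).trans_le hc
  have hac : ‖a * c‖ ≤ 1 := by
    rw [← norm_cstarAbs_mul, cstarAbs_mul_cfcₙ a (continuous_cutoffInv htpos) cutoffInv_zero]
    exact norm_cfcₙ_le fun s hs =>
      abs_mul_cutoffInv_le_one (nonneg_of_mem_quasispectrum_cstarAbs hs)
  have huc : ‖c‖ ≤ ‖polarIso a - polarIso a₀‖ * ‖c‖ + ‖polarIso a₀ * c‖ := by
    calc ‖c‖ = ‖(polarIso a - polarIso a₀) * c + polarIso a₀ * c‖ := by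
          rw [sub_mul, sub_add_cancel, norm_polarIso_mul_cfcₙ hcr (continuous_cutoffInv htpos)
            cutoffInv_zero]
      _ ≤ _ := (norm_add_le _ _).trans (by gcongr; exact norm_mul_le _ _)
  have ha₀c : crEps a₀ * ‖polarIso a₀ * c‖ ≤ 1 + ‖a - a₀‖ * ‖c‖ := by
    calc crEps a₀ * ‖polarIso a₀ * c‖ ≤ ‖a₀ * c‖ := crEps_mul_norm_polarIso_mul_le a₀ c
      _ = ‖a * c - (a - a₀) * c‖ := by rw [sub_mul, sub_sub_cancel]
      _ ≤ ‖a * c‖ + ‖a - a₀‖ * ‖c‖ := (norm_sub_le _ _).trans (by gcongr; exact norm_mul_le _ _)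
      _ ≤ 1 + ‖a - a₀‖ * ‖c‖ := by gcongr
  have htc : 1 ≤ t * ‖c‖ := by
    calc (1 : ℝ) = t * t⁻¹ := (mul_inv_cancel₀ htpos.ne').symm
      _ ≤ t * ‖c‖ := by gcongr
  refine le_of_mul_le_mul_right ?_ hc0
  nlinarith [crEps_pos a₀]

end PolarIso

section Continuity

open Filter Topology

variable {X : Type*} [TopologicalSpace X] {f : X → A}

lemma eventually_spectralGap_of_continuousAt {x₀ : X} (hf : ContinuousAt f x₀)
    (hcr : ∀ᶠ x in 𝓝 x₀, HasClosedRange (f x)) (hu : ContinuousAt (fun x => polarIso (f x)) x₀) :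
    ∀ᶠ x in 𝓝 x₀, SpectralGap (f x) (crEps (f x₀) / 2) := by
  set ε₀ := crEps (f x₀)
  have hε₀ : 0 < ε₀ := crEps_pos (f x₀)
  have hf' : ∀ᶠ x in 𝓝 x₀, ‖f x - f x₀‖ < ε₀ / 4 := by
    simpa only [dist_eq_norm] using Metric.tendsto_nhds.mp hf _ (by positivity)
  have hu' : ∀ᶠ x in 𝓝 x₀, ‖polarIso (f x) - polarIso (f x₀)‖ < 1 / 4 := by
    simpa only [dist_eq_norm] using Metric.tendsto_nhds.mp hu _ (by positivity)
  filter_upwards [hcr, hf', hu'] with x hx hfx hux t ht ⟨htpos, htlt⟩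
  have := crEps_mul_sub_le_of_mem_quasispectrum hx (f x₀) ht htpos
  nlinarith [mul_lt_mul_of_pos_left hux hε₀]

lemma continuousOn_polarIso_of_spectralGap {s : Set X} {δ : ℝ} (hf : ContinuousOn f s)
    (hcr : ∀ x ∈ s, HasClosedRange (f x)) (hδ : 0 < δ) (hgap : ∀ x ∈ s, SpectralGap (f x) δ) :
    ContinuousOn (fun x => polarIso (f x)) s := by
  have hcont : ContinuousOn (fun x => f x * cfcₙ (cutoffInv δ) (cstarAbs (f x))) s :=
    hf.mul <| ContinuousOn.cfcₙ_of_mem_nhdsSet (s := Set.univ) _ univ_mem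
      (continuous_cstarAbs.comp_continuousOn hf) (fun x _ => isSelfAdjoint_cstarAbs (f x))
      (continuous_cutoffInv hδ).continuousOn
  exact hcont.congr fun x hx => polarIso_eq_of_spectralGap (hcr x hx) hδ (hgap x hx)

end Continuity

/-- **Corollary 3.** If `f : X → A` is a continuous function from a topological
space into a C*-algebra such that `f x` has closed range for each `x`, and
`u x = 𝐮 (f x)`, then the set of continuity points of `u` is open. -/
theorem isOpen_continuousAt_polarIso
    {X : Type*} [TopologicalSpace X] {A : Type*} [NonUnitalCStarAlgebra A]
    (f : X → A) (hf : Continuous f) (hcr : ∀ x, HasClosedRange (f x))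
    (u : X → A) (hu : ∀ x, u x = polarIso (f x)) :
    IsOpen {x : X | ContinuousAt u x} := by
  obtain rfl : u = fun x => polarIso (f x) := funext hu
  refine isOpen_iff_mem_nhds.mpr fun x₀ hx₀ => ?_
  obtain ⟨U, hgap, hU, hx₀U⟩ := eventually_nhds_iff.mp
    (eventually_spectralGap_of_continuousAt hf.continuousAt (.of_forall hcr) hx₀)
  have hcont : ContinuousOn (fun x => polarIso (f x)) U :=
    continuousOn_polarIso_of_spectralGap hf.continuousOn (fun x _ => hcr x)
      (half_pos (crEps_pos _)) hgap
  exact Filter.mem_of_superset (hU.mem_nhds hx₀U) fun x hx => hcont.continuousAt (hU.mem_nhds hx)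
end

section
/- Let A be a unital C*-algebra, let a ∈ A have closed range, and let p₀ = 1 − 𝐮(a)𝐮(a)* and q₀ = 1 − 𝐮(a)*𝐮(a) be the left and right defect projections of a. Then a is a continuity point of the map 𝐮 (defined on the set of closed-range elements of A with the norm topology, with values in A) if and only if 0 is the only element of p₀Aq₀ = {p₀ x q₀ : x ∈ A} that has closed range. -/
open scoped NNReal

variable {A : Type*} [NonUnitalCStarAlgebra A]

/-! Closed range of `a` means a gap `(0, δ)` in the spectrum of `a* a`, and then
`𝐮 a = a g(a* a)` for any continuous `g` with `g 0 = 0` and `g t = t^(-1/2)` for `t ≥ δ`.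

If `b ≠ 0` is a closed range element of `p₀ A q₀`, then `a* b = 0` and `a b* = 0`, so `a* a`
and `b* b` are orthogonal and `𝐮 (a + r b) = 𝐮 a + 𝐮 b` for all `r > 0`; as `r → 0` this
does not tend to `𝐮 a`.

Conversely, by upper semicontinuity of the spectrum, for closed range `b` near `a` the spectrum
of `b* b` misses `[δ/3, 2δ/3]`. Cutting it there splits `𝐮 b = u' + w`, where `u'` depends
continuously on `b` and equals `𝐮 a` at `a`, and `w` is a partial isometry orthogonal to `u'`
on both sides. The compression `y = p₀ w q₀` is then within `3 ‖𝐮 a - u'‖` of `w`, so for `u'`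
close to `𝐮 a`, `y* y` is close to the projection `w* w` and its spectrum misses `(1/4, 3/4)`.
Cutting `y` there gives a closed range element of `p₀ A q₀`, which is nonzero unless `w = 0`. -/

section OrthogonalCFC

open scoped ContinuousMapZero
open NonUnitalContinuousFunctionalCalculus

lemma mul_cfcₙ_eq_zero_of_mul_eq_zero {c z : A} (hcz : c * z = 0)
    (f : ℝ → ℝ) : c * cfcₙ f z = 0 :=
  cfcₙ_cases (fun x ↦ c * x = 0) z f (mul_zero c) fun _ _ hz' ↦
    ContinuousMapZero.mul_nonUnitalStarAlgHom_apply_eq_zero _ c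
      (by rwa [cfcₙHom_id]) (by rwa [star_trivial, cfcₙHom_id]) (cfcₙHom_continuous hz') _

lemma cfcₙHomSuperset_mul_cfcₙHomSuperset_eq_zero {x y : A} (hx : IsSelfAdjoint x)
    (hy : IsSelfAdjoint y) (hxy : x * y = 0) {s : Set ℝ} [CompactSpace s] [Fact (0 ∈ s)]
    (hxs : quasispectrum ℝ x ⊆ s) (hys : quasispectrum ℝ y ⊆ s) (g h : C(s, ℝ)₀) :
    cfcₙHomSuperset hx hxs g * cfcₙHomSuperset hy hys h = 0 := by
  refine g.nonUnitalStarAlgHom_apply_mul_eq_zero _ _ ?_ ?_ (cfcₙHomSuperset_continuous hx hxs)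
  all_goals
    refine h.mul_nonUnitalStarAlgHom_apply_eq_zero _ _ ?_ ?_ (cfcₙHomSuperset_continuous hy hys)
    all_goals simp only [star_trivial, cfcₙHomSuperset_id, hxy]

lemma cfcₙ_add_of_mul_eq_zero {b c : A} (hb : IsSelfAdjoint b) (hc : IsSelfAdjoint c)
    (hbc : b * c = 0) (f : ℝ → ℝ)
    (hf : ContinuousOn f (quasispectrum ℝ (b + c) ∪ quasispectrum ℝ b ∪ quasispectrum ℝ c))
    (hf0 : f 0 = 0) :
    cfcₙ f (b + c) = cfcₙ f b + cfcₙ f c := by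
  set s := quasispectrum ℝ (b + c) ∪ quasispectrum ℝ b ∪ quasispectrum ℝ c
  have : CompactSpace s := isCompact_iff_compactSpace.mp <|
    ((isCompact_quasispectrum _).union (isCompact_quasispectrum _)).union
      (isCompact_quasispectrum _)
  obtain ⟨habs, hbs, hcs⟩ : quasispectrum ℝ (b + c) ⊆ s ∧ quasispectrum ℝ b ⊆ s ∧
      quasispectrum ℝ c ⊆ s := by grind
  have : Fact (0 ∈ s) := ⟨hbs (quasispectrum.zero_mem ℝ b)⟩
  have hcb : c * b = 0 := by simpa [hb.star_eq, hc.star_eq] using congr(star $hbc)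
  let ψ : C(s, ℝ)₀ →⋆ₙₐ[ℝ] A :=
    { (cfcₙHomSuperset hb hbs : C(s, ℝ)₀ →ₗ[ℝ] A) + (cfcₙHomSuperset hc hcs : C(s, ℝ)₀ →ₗ[ℝ] A)
        with
      toFun := cfcₙHomSuperset hb hbs + cfcₙHomSuperset hc hcs
      map_zero' := by simp [-cfcₙHomSuperset_apply]
      map_mul' := fun g h ↦ by
        simp only [Pi.add_apply, map_mul, mul_add, add_mul,
          cfcₙHomSuperset_mul_cfcₙHomSuperset_eq_zero hb hc hbc hbs hcs,
          cfcₙHomSuperset_mul_cfcₙHomSuperset_eq_zero hc hb hcb hcs hbs, add_zero, zero_add]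
      map_star' := fun g ↦ by simp [← map_star] }
  have key : cfcₙHomSuperset (hb.add hc) habs = ψ :=
    have : ContinuousMapZero.UniqueHom ℝ A := inferInstance
    ContinuousMapZero.UniqueHom.eq_of_continuous_of_map_id s _ ψ
      (cfcₙHomSuperset_continuous _ habs)
      ((cfcₙHomSuperset_continuous hb hbs).add (cfcₙHomSuperset_continuous hc hcs))
      ((cfcₙHomSuperset_id (hb.add hc) habs).trans
        congr($(cfcₙHomSuperset_id hb hbs) + $(cfcₙHomSuperset_id hc hcs)).symm)
  have apply_eq {x : A} (hx : IsSelfAdjoint x) (hxs : quasispectrum ℝ x ⊆ s) :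
      cfcₙHomSuperset hx hxs ⟨⟨_, hf.domRestrict⟩, hf0⟩ = cfcₙ f x := by
    rw [cfcₙ_apply f x (hf.mono hxs) hf0]
    rfl
  rw [← apply_eq (hb.add hc) habs, key, ← apply_eq hb hbs, ← apply_eq hc hcs]
  rfl

lemma quasispectrum_add_subset_of_mul_eq_zero {b c : A} (hb : IsSelfAdjoint b)
    (hc : IsSelfAdjoint c) (hbc : b * c = 0) :
    quasispectrum ℝ (b + c) ⊆ quasispectrum ℝ b ∪ quasispectrum ℝ c := by
  set S := quasispectrum ℝ b ∪ quasispectrum ℝ c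
  have hS : IsClosed S :=
    (isCompact_quasispectrum b).isClosed.union (isCompact_quasispectrum c).isClosed
  have hb0 : (0 : ℝ) ∈ S := Or.inl (quasispectrum.zero_mem ℝ b)
  -- `t ↦ dist t S` vanishes on the quasispectra of `b` and `c`, hence on that of `b + c`
  set f : ℝ → ℝ := (Metric.infDist · S)
  have hf : Continuous f := Metric.continuous_infDist_pt S
  have hf0 : f 0 = 0 := Metric.infDist_zero_of_mem hb0
  have cfcₙ_f_eq_zero {x : A} (hx : quasispectrum ℝ x ⊆ S) : cfcₙ f x = 0 := by
    rw [cfcₙ_congr (g := 0) fun t ht ↦ Metric.infDist_zero_of_mem (hx ht), cfcₙ_zero]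
  have hsum := cfcₙ_add_of_mul_eq_zero hb hc hbc f hf.continuousOn hf0
  rw [cfcₙ_f_eq_zero Set.subset_union_left, cfcₙ_f_eq_zero Set.subset_union_right,
    add_zero] at hsum
  intro t ht
  have hft : f t ∈ quasispectrum ℝ (cfcₙ f (b + c)) := by
    rw [cfcₙ_map_quasispectrum f (b + c)]
    exact ⟨t, ht, rfl⟩
  rw [hsum, CFC.quasispectrum_zero_eq, Set.mem_singleton_iff] at hft
  exact (hS.mem_iff_infDist_zero ⟨0, hb0⟩).mpr hft

end OrthogonalCFC

section ClosedRange

def HasSpectralGap (a : A) (δ : ℝ) : Prop :=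
  ∀ t ∈ quasispectrum ℝ (star a * a), t ∉ Set.Ioo 0 δ

lemma quasispectrum_cstarAbs (a : A) :
    quasispectrum ℝ (cstarAbs a) = Real.sqrt '' quasispectrum ℝ (star a * a) :=
  cfcₙ_map_quasispectrum ..

lemma nonneg_of_mem_quasispectrum_star_mul_self {a : A} {t : ℝ}
    (ht : t ∈ quasispectrum ℝ (star a * a)) : 0 ≤ t := by
  rw [Unitization.quasispectrum_eq_spectrum_inr' ℝ ℂ, Unitization.inr_mul, Unitization.inr_star]
    at ht
  exact spectrum_star_mul_self_nonneg t ht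

lemma hasClosedRange_iff (a : A) : HasClosedRange a ↔ ∃ δ > 0, HasSpectralGap a δ := by
  simp only [HasClosedRange, HasSpectralGap, quasispectrum_cstarAbs, Set.forall_mem_image]
  constructor
  · rintro ⟨ε, hε, hgap⟩
    exact ⟨ε ^ 2, by positivity, fun t ht ⟨ht0, htε⟩ ↦
      hgap ht ⟨Real.sqrt_pos.mpr ht0, (Real.sqrt_lt' hε).mpr htε⟩⟩
  · rintro ⟨δ, hδ, hgap⟩
    exact ⟨√δ, Real.sqrt_pos.mpr hδ, fun t ht ⟨ht0, htδ⟩ ↦ hgap t ht ⟨Real.sqrt_pos.mp ht0,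
      (Real.sqrt_lt_sqrt_iff (nonneg_of_mem_quasispectrum_star_mul_self ht)).mp htδ⟩⟩

namespace HasSpectralGap

variable {a : A} {δ : ℝ}

lemma hasClosedRange (h : HasSpectralGap a δ) (hδ : 0 < δ) : HasClosedRange a :=
  (hasClosedRange_iff a).mpr ⟨δ, hδ, h⟩

lemma mono (h : HasSpectralGap a δ) {δ' : ℝ} (hδ' : δ' ≤ δ) : HasSpectralGap a δ' :=
  fun t ht ht' ↦ h t ht ⟨ht'.1, ht'.2.trans_le hδ'⟩

lemma le_of_mem (h : HasSpectralGap a δ) {t : ℝ} (ht : t ∈ quasispectrum ℝ (star a * a))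
    (ht0 : t ≠ 0) : δ ≤ t :=
  not_lt.mp fun h' ↦ h t ht ⟨(nonneg_of_mem_quasispectrum_star_mul_self ht).lt_of_ne' ht0, h'⟩

end HasSpectralGap

lemma crEps_spec {a : A} (ha : HasClosedRange a) :
    0 < crEps a ∧ ∀ x ∈ quasispectrum ℝ (cstarAbs a), x ∉ Set.Ioo 0 (crEps a) := by
  rw [crEps, dif_pos ha]
  exact ha.choose_spec

noncomputable def invSqrtCutoff (δ t : ℝ) : ℝ := √t / max t δ

lemma continuous_invSqrtCutoff {δ : ℝ} (hδ : 0 < δ) : Continuous (invSqrtCutoff δ) :=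
  Real.continuous_sqrt.div (continuous_id.max continuous_const) fun _ ↦
    (hδ.trans_le (le_max_right _ _)).ne'

@[simp]
lemma invSqrtCutoff_zero (δ : ℝ) : invSqrtCutoff δ 0 = 0 := by simp [invSqrtCutoff]

lemma invSqrtCutoff_of_le {δ t : ℝ} (h : δ ≤ t) : invSqrtCutoff δ t = (√t)⁻¹ := by
  rw [invSqrtCutoff, max_eq_left h, Real.sqrt_div_self', one_div]

lemma invSqrtCutoff_mul_self_mul {δ t : ℝ} (hδ : 0 < δ) (h : δ ≤ t) :
    invSqrtCutoff δ t * t * invSqrtCutoff δ t = 1 := by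
  calc invSqrtCutoff δ t * t * invSqrtCutoff δ t = t / (√t * √t) := by
        rw [invSqrtCutoff_of_le h]; ring
    _ = 1 := by rw [Real.mul_self_sqrt (hδ.le.trans h), div_self (hδ.trans_le h).ne']

lemma invSqrtCutoff_sq_mul {δ r : ℝ} (hr : 0 < r) (t : ℝ) :
    invSqrtCutoff (r ^ 2 * δ) (r ^ 2 * t) = r⁻¹ * invSqrtCutoff δ t := by
  rw [invSqrtCutoff, invSqrtCutoff, ← mul_max_of_nonneg _ _ (by positivity),
    Real.sqrt_mul (by positivity), Real.sqrt_sq hr.le]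
  field_simp

lemma polarIso_eq_mul_cfcₙ {a : A} {δ : ℝ} (hδ : 0 < δ) (hgap : HasSpectralGap a δ) :
    polarIso a = a * cfcₙ (invSqrtCutoff δ) (star a * a) := by
  obtain ⟨hε, hεgap⟩ := crEps_spec (hgap.hasClosedRange hδ)
  have hcont : Continuous fun t : ℝ ↦ t * (max t (crEps a))⁻¹ ^ 2 :=
    continuous_id.mul <| ((continuous_id.max continuous_const).inv₀ fun _ ↦
      (hε.trans_le (le_max_right _ _)).ne').pow 2
  rw [polarIso, cstarAbs, ← cfcₙ_comp' _ _ _ hcont.continuousOn (by simp)]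
  refine congrArg _ (cfcₙ_congr fun t ht ↦ ?_)
  obtain rfl | ht0 := (nonneg_of_mem_quasispectrum_star_mul_self ht).eq_or_lt
  · simp
  have hsqrt : crEps a ≤ √t := not_lt.mp fun h ↦ hεgap _
    (quasispectrum_cstarAbs a ▸ Set.mem_image_of_mem _ ht) ⟨Real.sqrt_pos.mpr ht0, h⟩
  rw [max_eq_left hsqrt, invSqrtCutoff_of_le (hgap.le_of_mem ht ht0.ne'),
    inv_pow, Real.sq_sqrt ht0.le, ← div_eq_mul_inv, Real.sqrt_div_self', one_div]

end ClosedRange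

section PolarIsoAdd

variable {a b : A}

lemma star_smul_mul_smul (r : ℝ) (a : A) : star (r • a) * (r • a) = r ^ 2 • (star a * a) := by
  rw [star_smul, star_trivial, smul_mul_smul_comm, sq]

lemma HasSpectralGap.smul {δ : ℝ} (hgap : HasSpectralGap a δ) {r : ℝ} (hr : 0 < r) :
    HasSpectralGap (r • a) (r ^ 2 * δ) := by
  rw [HasSpectralGap, star_smul_mul_smul, ← cfcₙ_const_mul_id (r ^ 2) (star a * a),
    cfcₙ_map_quasispectrum (r ^ 2 * ·) (star a * a)]
  rintro _ ⟨t, ht, rfl⟩ ⟨h0, hδt⟩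
  exact hgap t ht ⟨pos_of_mul_pos_right h0 (by positivity),
    lt_of_mul_lt_mul_left hδt (by positivity)⟩

lemma hasClosedRange_smul (ha : HasClosedRange a) {r : ℝ} (hr : 0 < r) :
    HasClosedRange (r • a) := by
  obtain ⟨δ, hδ, hgap⟩ := (hasClosedRange_iff a).mp ha
  exact (hgap.smul hr).hasClosedRange (by positivity)

lemma polarIso_smul (ha : HasClosedRange a) {r : ℝ} (hr : 0 < r) :
    polarIso (r • a) = polarIso a := by
  obtain ⟨δ, hδ, hgap⟩ := (hasClosedRange_iff a).mp ha
  rw [polarIso_eq_mul_cfcₙ (by positivity) (hgap.smul hr), polarIso_eq_mul_cfcₙ hδ hgap,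
    star_smul_mul_smul, ← cfcₙ_comp_const_mul _ _ _
      (continuous_invSqrtCutoff (by positivity)).continuousOn]
  simp_rw [invSqrtCutoff_sq_mul hr]
  rw [cfcₙ_const_mul _ _ _ (continuous_invSqrtCutoff hδ).continuousOn, smul_mul_smul_comm,
    mul_inv_cancel₀ hr.ne', one_smul]

lemma star_add_mul_add_of_orthogonal (h₁ : star a * b = 0) :
    star (a + b) * (a + b) = star a * a + star b * b := by
  have h₂ : star b * a = 0 := by simpa using congr(star $h₁)
  rw [star_add, add_mul, mul_add, mul_add, h₁, h₂, add_zero, zero_add]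

lemma star_mul_self_mul_star_mul_self_of_orthogonal (h₂ : a * star b = 0) :
    star a * a * (star b * b) = 0 := by
  rw [mul_assoc, ← mul_assoc a, h₂, zero_mul, mul_zero]

lemma exists_hasSpectralGap_add (ha : HasClosedRange a) (hb : HasClosedRange b)
    (h₁ : star a * b = 0) (h₂ : a * star b = 0) :
    ∃ δ > 0, HasSpectralGap a δ ∧ HasSpectralGap b δ ∧ HasSpectralGap (a + b) δ := by
  obtain ⟨δa, hδa, hgapa⟩ := (hasClosedRange_iff a).mp ha
  obtain ⟨δb, hδb, hgapb⟩ := (hasClosedRange_iff b).mp hb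
  have gapa := hgapa.mono (min_le_left δa δb)
  have gapb := hgapb.mono (min_le_right δa δb)
  refine ⟨min δa δb, lt_min hδa hδb, gapa, gapb, fun t ht ↦ ?_⟩
  rw [star_add_mul_add_of_orthogonal h₁] at ht
  exact (quasispectrum_add_subset_of_mul_eq_zero (.star_mul_self a) (.star_mul_self b)
    (star_mul_self_mul_star_mul_self_of_orthogonal h₂) ht).elim (gapa t) (gapb t)

lemma hasClosedRange_add (ha : HasClosedRange a) (hb : HasClosedRange b)
    (h₁ : star a * b = 0) (h₂ : a * star b = 0) : HasClosedRange (a + b) := by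
  obtain ⟨δ, hδ, -, -, hgap⟩ := exists_hasSpectralGap_add ha hb h₁ h₂
  exact hgap.hasClosedRange hδ

lemma polarIso_add (ha : HasClosedRange a) (hb : HasClosedRange b)
    (h₁ : star a * b = 0) (h₂ : a * star b = 0) :
    polarIso (a + b) = polarIso a + polarIso b := by
  obtain ⟨δ, hδ, hgapa, hgapb, hgap⟩ := exists_hasSpectralGap_add ha hb h₁ h₂
  have hb₂ : b * star a = 0 := by simpa using congr(star $h₂)
  rw [polarIso_eq_mul_cfcₙ hδ hgap, polarIso_eq_mul_cfcₙ hδ hgapa, polarIso_eq_mul_cfcₙ hδ hgapb,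
    star_add_mul_add_of_orthogonal h₁,
    cfcₙ_add_of_mul_eq_zero (.star_mul_self a) (.star_mul_self b)
      (star_mul_self_mul_star_mul_self_of_orthogonal h₂) _
      (continuous_invSqrtCutoff hδ).continuousOn (invSqrtCutoff_zero δ),
    add_mul, mul_add, mul_add,
    mul_cfcₙ_eq_zero_of_mul_eq_zero (c := a) (z := star b * b)
      (by rw [← mul_assoc, h₂, zero_mul]),
    mul_cfcₙ_eq_zero_of_mul_eq_zero (c := b) (z := star a * a)
      (by rw [← mul_assoc, hb₂, zero_mul]),
    add_zero, zero_add]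

end PolarIsoAdd

section PartialIsometry

lemma norm_le_one_of_isStarProjection_star_mul_self {w : A}
    (hw : IsStarProjection (star w * w)) : ‖w‖ ≤ 1 := by
  have := hw.norm_le
  rw [CStarRing.norm_star_mul_self] at this
  nlinarith [norm_nonneg w]

lemma norm_eq_one_of_isStarProjection_star_mul_self {w : A}
    (hw : IsStarProjection (star w * w)) (hw0 : w ≠ 0) : ‖w‖ = 1 := by
  have h : ‖star w * w‖ = ‖star w * w‖ * ‖star w * w‖ := by
    rw [← CStarRing.norm_star_mul_self, hw.isSelfAdjoint.star_eq, hw.isIdempotentElem.eq]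
  rw [CStarRing.norm_star_mul_self] at h
  have hpos : 0 < ‖w‖ * ‖w‖ := by have := norm_pos_iff.mpr hw0; positivity
  have hsq : ‖w‖ * ‖w‖ = 1 := by nlinarith
  nlinarith [norm_nonneg w]

lemma orthogonal_split_of_commute {R : Type*} [Ring R] [StarRing R] {v E : R}
    (hv : IsStarProjection (star v * v)) (hE : IsStarProjection E) (hvE : Commute E (star v * v)) :
    star (v * E) * (v * (1 - E)) = 0 ∧ v * (1 - E) * star (v * E) = 0 ∧
      IsStarProjection (star (v * (1 - E)) * (v * (1 - E))) := by
  have hvE' : Commute (1 - E) (star v * v) := (Commute.one_left _).sub_left hvE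
  have h₁ : star (v * E) * (v * (1 - E)) = star v * v * (E * (1 - E)) := by
    rw [star_mul, hE.isSelfAdjoint.star_eq, mul_assoc, ← mul_assoc (star v), ← mul_assoc E,
      hvE.eq, mul_assoc]
  have h₃ : star (v * (1 - E)) * (v * (1 - E)) = star v * v * (1 - E) := by
    rw [star_mul, hE.one_sub.isSelfAdjoint.star_eq, mul_assoc, ← mul_assoc (star v),
      ← mul_assoc (1 - E), hvE'.eq, mul_assoc, hE.one_sub.isIdempotentElem.eq]
  refine ⟨by rw [h₁, hE.mul_one_sub_self, mul_zero], ?_, ?_⟩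
  · rw [star_mul, hE.isSelfAdjoint.star_eq, mul_assoc, ← mul_assoc (1 - E),
      hE.one_sub_mul_self, zero_mul, mul_zero]
  · rw [h₃]
    exact hv.mul hE.one_sub hvE'.symm

end PartialIsometry

section Cutoff

noncomputable def ramp (c d t : ℝ) : ℝ := min 1 (max 0 ((t - c) / (d - c)))

lemma continuous_ramp (c d : ℝ) : Continuous (ramp c d) := by
  unfold ramp
  fun_prop

lemma ramp_of_le {c d t : ℝ} (hcd : c < d) (h : t ≤ c) : ramp c d t = 0 := by
  rw [ramp, max_eq_left (div_nonpos_of_nonpos_of_nonneg (by linarith) (by linarith)),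
    min_eq_right zero_le_one]

lemma ramp_of_ge {c d t : ℝ} (hcd : c < d) (h : d ≤ t) : ramp c d t = 1 :=
  min_eq_left <| le_max_of_le_right <| (one_le_div (by linarith)).mpr (by linarith)

lemma ramp_eq_zero_or_one {c d t : ℝ} (hcd : c < d) (ht : t ∉ Set.Ioo c d) :
    ramp c d t = 0 ∨ ramp c d t = 1 := by
  rcases le_or_gt t c with h | h
  · exact .inl (ramp_of_le hcd h)
  · exact .inr (ramp_of_ge hcd (not_lt.mp fun h' ↦ ht ⟨h, h'⟩))

end Cutoff

section Unital

open Filter Topology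

variable {B : Type*} [CStarAlgebra B]

lemma star_mul_cfc_mul_mul_cfc (x : B) {f g : ℝ → ℝ}
    (hf : ContinuousOn f (spectrum ℝ (star x * x)))
    (hg : ContinuousOn g (spectrum ℝ (star x * x))) :
    star (x * cfc f (star x * x)) * (x * cfc g (star x * x)) =
      cfc (fun t ↦ f t * t * g t) (star x * x) := by
  rw [cfc_mul (fun t ↦ f t * t) g _ (hf.mul continuousOn_id) hg,
    cfc_mul f (fun t ↦ t) _ hf continuousOn_id,
    cfc_id' ℝ (star x * x), star_mul, (cfc_predicate f (star x * x)).star_eq]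
  simp only [mul_assoc]

lemma mul_cfc_eq_self (x : B) {f : ℝ → ℝ} (hf : ContinuousOn f (spectrum ℝ (star x * x)))
    (h : ∀ t ∈ spectrum ℝ (star x * x), t ≠ 0 → f t = 1) : x * cfc f (star x * x) = x := by
  have hsub : x - x * cfc f (star x * x) = x * cfc (fun t ↦ 1 - f t) (star x * x) := by
    rw [cfc_sub (fun _ ↦ 1) f _ continuousOn_const hf, cfc_const_one ℝ (star x * x), mul_sub,
      mul_one]
  refine (sub_eq_zero.mp ?_).symm
  rw [hsub, ← CStarRing.star_mul_self_eq_zero_iff,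
    star_mul_cfc_mul_mul_cfc x (f := fun t ↦ 1 - f t) (g := fun t ↦ 1 - f t)
      (continuousOn_const.sub hf) (continuousOn_const.sub hf)]
  refine (cfc_congr fun t ht ↦ ?_).trans (cfc_zero ℝ _)
  obtain rfl | ht0 := eq_or_ne t 0
  · simp
  · simp [h t ht ht0]

lemma isStarProjection_cfc {z : B} (hz : IsSelfAdjoint z) {f : ℝ → ℝ}
    (hf : ContinuousOn f (spectrum ℝ z)) (h01 : ∀ t ∈ spectrum ℝ z, f t = 0 ∨ f t = 1) :
    IsStarProjection (cfc f z) := by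
  refine isStarProjection_iff_spectrum_subset_and_isSelfAdjoint.mpr ⟨?_, cfc_predicate f z⟩
  rw [cfc_map_spectrum f z]
  rintro _ ⟨t, ht, rfl⟩
  exact h01 t ht

section Polar

variable {a : B}

lemma HasSpectralGap.le_of_mem_spectrum {δ t : ℝ} (h : HasSpectralGap a δ)
    (ht : t ∈ spectrum ℝ (star a * a)) (ht0 : t ≠ 0) : δ ≤ t :=
  h.le_of_mem (spectrum_subset_quasispectrum ℝ _ ht) ht0

lemma polarIso_eq_mul_cfc {δ : ℝ} (hδ : 0 < δ) (hgap : HasSpectralGap a δ) :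
    polarIso a = a * cfc (invSqrtCutoff δ) (star a * a) := by
  rw [polarIso_eq_mul_cfcₙ hδ hgap, cfcₙ_eq_cfc (continuous_invSqrtCutoff hδ).continuousOn]

lemma star_polarIso_mul_polarIso_eq {δ : ℝ} (hδ : 0 < δ) (hgap : HasSpectralGap a δ) :
    star (polarIso a) * polarIso a =
      cfc (fun t ↦ invSqrtCutoff δ t * t * invSqrtCutoff δ t) (star a * a) := by
  have hc := (continuous_invSqrtCutoff hδ).continuousOn (s := spectrum ℝ (star a * a))
  rw [polarIso_eq_mul_cfc hδ hgap, star_mul_cfc_mul_mul_cfc a hc hc]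

lemma isStarProjection_star_polarIso_mul_polarIso (ha : HasClosedRange a) :
    IsStarProjection (star (polarIso a) * polarIso a) := by
  obtain ⟨δ, hδ, hgap⟩ := (hasClosedRange_iff a).mp ha
  have hc := continuous_invSqrtCutoff hδ
  rw [star_polarIso_mul_polarIso_eq hδ hgap]
  refine isStarProjection_cfc (.star_mul_self a) (by fun_prop) fun t ht ↦ ?_
  obtain rfl | ht0 := eq_or_ne t 0
  · simp
  · exact .inr <| invSqrtCutoff_mul_self_mul hδ <| hgap.le_of_mem_spectrum ht ht0

lemma mul_star_polarIso_mul_polarIso (ha : HasClosedRange a) :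
    a * (star (polarIso a) * polarIso a) = a := by
  obtain ⟨δ, hδ, hgap⟩ := (hasClosedRange_iff a).mp ha
  have hc := continuous_invSqrtCutoff hδ
  rw [star_polarIso_mul_polarIso_eq hδ hgap]
  exact mul_cfc_eq_self a (by fun_prop) fun t ht ht0 ↦ invSqrtCutoff_mul_self_mul hδ <|
    hgap.le_of_mem_spectrum ht ht0

lemma polarIso_mul_star_polarIso_mul (ha : HasClosedRange a) :
    polarIso a * star (polarIso a) * a = a := by
  obtain ⟨δ, hδ, hgap⟩ := (hasClosedRange_iff a).mp ha
  have hc := continuous_invSqrtCutoff hδ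
  have hstar : star (polarIso a) * a = cfc (fun t ↦ invSqrtCutoff δ t * t) (star a * a) := by
    have := star_mul_cfc_mul_mul_cfc a (g := fun _ ↦ 1) hc.continuousOn continuousOn_const
    simp only [cfc_const_one ℝ (star a * a), mul_one] at this
    rw [polarIso_eq_mul_cfc hδ hgap, this]
  rw [mul_assoc, hstar, polarIso_eq_mul_cfc hδ hgap, mul_assoc, ← cfc_mul _ _ _ hc.continuousOn]
  exact mul_cfc_eq_self a (by fun_prop) fun t ht ht0 ↦ by
    rw [← mul_assoc, mul_right_comm, invSqrtCutoff_mul_self_mul hδ <|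
      hgap.le_of_mem_spectrum ht ht0]

lemma norm_polarIso_le_one (ha : HasClosedRange a) : ‖polarIso a‖ ≤ 1 :=
  norm_le_one_of_isStarProjection_star_mul_self (isStarProjection_star_polarIso_mul_polarIso ha)

lemma polarIso_ne_zero (ha : HasClosedRange a) (ha0 : a ≠ 0) : polarIso a ≠ 0 := fun h ↦
  ha0 (by rw [← polarIso_mul_star_polarIso_mul ha, h, zero_mul, zero_mul])

lemma star_mul_one_sub_polarIso_mul_star_polarIso (ha : HasClosedRange a) :
    star a * (1 - polarIso a * star (polarIso a)) = 0 := by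
  have := congr(star $(polarIso_mul_star_polarIso_mul ha))
  rw [star_mul, star_mul, star_star] at this
  rw [mul_sub, mul_one, this, sub_self]

lemma one_sub_star_polarIso_mul_polarIso_mul_star (ha : HasClosedRange a) :
    (1 - star (polarIso a) * polarIso a) * star a = 0 := by
  have := congr(star $(mul_star_polarIso_mul_polarIso ha))
  rw [star_mul, star_mul, star_star] at this
  rw [sub_mul, one_mul, this, sub_self]

lemma orthogonal_of_mem_corner (ha : HasClosedRange a) {b : B}
    (hb : ∃ x : B, b = (1 - polarIso a * star (polarIso a)) * x *
      (1 - star (polarIso a) * polarIso a)) :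
    star a * b = 0 ∧ a * star b = 0 := by
  obtain ⟨x, rfl⟩ := hb
  have h : (1 - polarIso a * star (polarIso a)) * x * (1 - star (polarIso a) * polarIso a) *
      star a = 0 := by rw [mul_assoc, one_sub_star_polarIso_mul_polarIso_mul_star ha, mul_zero]
  refine ⟨?_, by simpa using congr(star $h)⟩
  rw [← mul_assoc, ← mul_assoc, star_mul_one_sub_polarIso_mul_star_polarIso ha, zero_mul, zero_mul]

lemma not_continuousWithinAt_polarIso {b : B} (ha : HasClosedRange a) (hb : HasClosedRange b)
    (hb0 : b ≠ 0) (h₁ : star a * b = 0) (h₂ : a * star b = 0) :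
    ¬ContinuousWithinAt polarIso {x : B | HasClosedRange x} a := by
  intro hcont
  have h₁' {r : ℝ} : star a * (r • b) = 0 := by rw [mul_smul_comm, h₁, smul_zero]
  have h₂' {r : ℝ} : a * star (r • b) = 0 := by
    rw [star_smul, star_trivial, mul_smul_comm, h₂, smul_zero]
  have hlim : Tendsto (fun r : ℝ ↦ a + r • b) (𝓝[>] 0) (𝓝[{x | HasClosedRange x}] a) := by
    refine tendsto_nhdsWithin_iff.mpr ⟨?_, eventually_nhdsWithin_of_forall fun r hr ↦
      hasClosedRange_add ha (hasClosedRange_smul hb hr) h₁' h₂'⟩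
    exact ((continuous_const.add (continuous_id.smul continuous_const)).tendsto' 0 a
      (by simp)).mono_left nhdsWithin_le_nhds
  have hconst : Tendsto (fun _ : ℝ ↦ polarIso a + polarIso b) (𝓝[>] 0) (𝓝 (polarIso a)) :=
    (hcont.tendsto.comp hlim).congr' <| eventually_nhdsWithin_of_forall fun r hr ↦ by
      simp only [Function.comp_apply]
      rw [polarIso_add ha (hasClosedRange_smul hb hr) h₁' h₂', polarIso_smul hb hr]
  exact polarIso_ne_zero hb hb0 <| by simpa using tendsto_nhds_unique tendsto_const_nhds hconst

end Polar

section Backward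

lemma notMem_spectrum_of_norm_sub_lt {h R : B} (hR : IsStarProjection R) {r : ℝ}
    (hr0 : r ≠ 0) (hr1 : r ≠ 1) (hnorm : ‖h - R‖ * (|r|⁻¹ + |r - 1|⁻¹) < 1) :
    r ∉ spectrum ℝ h := by
  -- `X = (r - R)⁻¹`
  set X : B := r⁻¹ • (1 - R) + (r - 1)⁻¹ • R
  have hr1' : r - 1 ≠ 0 := sub_ne_zero.mpr hr1
  have hX : ‖X‖ ≤ |r|⁻¹ + |r - 1|⁻¹ := by
    refine (norm_add_le _ _).trans (add_le_add ?_ ?_) <;> rw [norm_smul, Real.norm_eq_abs, abs_inv]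
    · exact mul_le_of_le_one_right (by positivity) hR.one_sub.norm_le
    · exact mul_le_of_le_one_right (by positivity) hR.norm_le
  have hP : (algebraMap ℝ B r - R) * (1 - R) = r • (1 - R) ∧ (1 - R) * (algebraMap ℝ B r - R) =
      r • (1 - R) := by
    rw [Algebra.algebraMap_eq_smul_one, sub_mul, smul_mul_assoc, one_mul, hR.mul_one_sub_self,
      mul_sub, mul_smul_comm, mul_one, hR.one_sub_mul_self]
    simp
  have hQ : (algebraMap ℝ B r - R) * R = (r - 1) • R ∧ R * (algebraMap ℝ B r - R) =
      (r - 1) • R := by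
    rw [Algebra.algebraMap_eq_smul_one, sub_mul, smul_mul_assoc, one_mul, mul_sub, mul_smul_comm,
      mul_one, hR.isIdempotentElem.eq, sub_smul, one_smul]
    simp
  have hleft : (algebraMap ℝ B r - R) * X = 1 := by
    rw [mul_add, mul_smul_comm, mul_smul_comm, hP.1, hQ.1, smul_smul, smul_smul,
      inv_mul_cancel₀ hr0, inv_mul_cancel₀ hr1', one_smul, one_smul, sub_add_cancel]
  have hright : X * (algebraMap ℝ B r - R) = 1 := by
    rw [add_mul, smul_mul_assoc, smul_mul_assoc, hP.2, hQ.2, smul_smul, smul_smul,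
      inv_mul_cancel₀ hr0, inv_mul_cancel₀ hr1', one_smul, one_smul, sub_add_cancel]
  have hfactor : algebraMap ℝ B r - h = (algebraMap ℝ B r - R) * (1 - X * (h - R)) := by
    rw [mul_sub, mul_one, ← mul_assoc, hleft, one_mul]
    abel
  have hsmall : ‖X * (h - R)‖ < 1 := by
    refine (norm_mul_le _ _).trans_lt ?_
    nlinarith [norm_nonneg X, norm_nonneg (h - R)]
  rw [spectrum.mem_iff, not_not, hfactor]
  exact (Units.mk _ X hleft hright).isUnit.mul (isUnit_one_sub_of_norm_lt_one hsmall)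

lemma spectrum_star_mul_self_gap_of_near {y w : B} (hw : IsStarProjection (star w * w))
    (hyw : ‖y - w‖ ≤ 1 / 20) : ∀ t ∈ spectrum ℝ (star y * y), t ∉ Set.Ioo (1 / 4) (3 / 4) := by
  rintro t ht ⟨ht₁, ht₂⟩
  have hw₁ := norm_le_one_of_isStarProjection_star_mul_self hw
  have hy : ‖y‖ ≤ 21 / 20 := by linarith [norm_le_norm_add_norm_sub' y w]
  have hnear : ‖star y * y - star w * w‖ ≤ 41 / 400 := by
    have : star y * y - star w * w = star y * (y - w) + star (y - w) * w := by
      rw [star_sub]; noncomm_ring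
    rw [this]
    refine (norm_add_le _ _).trans ((add_le_add (norm_mul_le _ _) (norm_mul_le _ _)).trans ?_)
    rw [norm_star, norm_star]
    nlinarith [norm_nonneg y, norm_nonneg (y - w), norm_nonneg w]
  have hinv₁ : |t|⁻¹ < 4 := by
    rw [abs_of_pos (by linarith)]; exact inv_lt_of_inv_lt₀ (by norm_num) (by linarith)
  have hinv₂ : |t - 1|⁻¹ < 4 := by
    rw [abs_of_neg (by linarith)]; exact inv_lt_of_inv_lt₀ (by norm_num) (by linarith)
  refine notMem_spectrum_of_norm_sub_lt hw (by linarith) (by linarith) ?_ ht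
  nlinarith [norm_nonneg (star y * y - star w * w), inv_nonneg.mpr (abs_nonneg t),
    inv_nonneg.mpr (abs_nonneg (t - 1))]

lemma hasClosedRange_mul_cfc_ramp {y : B} {c d : ℝ} (hd : 0 < d) (hcd : c < d)
    (hgap : ∀ t ∈ spectrum ℝ (star y * y), t ∉ Set.Ioo c d) :
    HasClosedRange (y * cfc (ramp c d) (star y * y)) := by
  have hr := (continuous_ramp c d).continuousOn (s := spectrum ℝ (star y * y))
  refine HasSpectralGap.hasClosedRange (δ := d) ?_ hd
  rw [HasSpectralGap, star_mul_cfc_mul_mul_cfc y hr hr, quasispectrum_eq_spectrum_union_zero,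
    cfc_map_spectrum (fun t ↦ ramp c d t * t * ramp c d t) _ (.star_mul_self y)
      ((hr.mul continuousOn_id).mul hr)]
  rintro _ (⟨t, ht, rfl⟩ | rfl) hmem
  · dsimp only at hmem
    rcases le_or_gt t c with h | h
    · simp [ramp_of_le hcd h] at hmem
    · rw [ramp_of_ge hcd (not_lt.mp fun h' ↦ hgap t ht ⟨h, h'⟩), mul_one, one_mul] at hmem
      exact hgap t ht ⟨h, hmem.2⟩
  · exact lt_irrefl _ hmem.1

lemma mul_cfc_ramp_ne_zero {y : B} {c d : ℝ} (hc : 0 ≤ c) (hcd : c < d)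
    (hgap : ∀ t ∈ spectrum ℝ (star y * y), t ∉ Set.Ioo c d) (hy : c < ‖y‖ ^ 2) :
    y * cfc (ramp c d) (star y * y) ≠ 0 := by
  intro he
  have hr := (continuous_ramp c d).continuousOn (s := spectrum ℝ (star y * y))
  have hy' : y * cfc (fun t ↦ 1 - ramp c d t) (star y * y) = y := by
    rw [cfc_sub (fun _ ↦ 1) _ _ continuousOn_const hr, cfc_const_one ℝ (star y * y), mul_sub,
      mul_one, he, sub_zero]
  have hle : ‖y‖ ^ 2 ≤ c := by
    rw [sq, ← CStarRing.norm_star_mul_self, ← hy', star_mul_cfc_mul_mul_cfc y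
      (f := fun t ↦ 1 - ramp c d t) (g := fun t ↦ 1 - ramp c d t)
      (continuousOn_const.sub hr) (continuousOn_const.sub hr)]
    refine norm_cfc_le hc fun t ht ↦ ?_
    have ht0 : 0 ≤ t := spectrum_star_mul_self_nonneg t ht
    rcases le_or_gt t c with h | h
    · simpa [ramp_of_le hcd h, abs_of_nonneg ht0] using h
    · simpa [ramp_of_ge hcd (not_lt.mp fun h' ↦ hgap t ht ⟨h, h'⟩)] using hc
  linarith

lemma exists_mul_cfc_eq_corner {p x q : B} (hq : IsStarProjection q) (f : ℝ → ℝ) :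
    ∃ x', p * x * q * cfc f (star (p * x * q) * (p * x * q)) = p * x' * q := by
  set y := p * x * q with hy
  clear_value y
  have hyq : y * q = y := by rw [hy, mul_assoc, hq.isIdempotentElem.eq]
  have hqy : q * star y = star y := by simpa [hq.isSelfAdjoint.star_eq] using congr(star $hyq)
  have hcomm : Commute (star y * y) q := by
    rw [Commute, SemiconjBy, mul_assoc, hyq, ← mul_assoc, hqy]
  refine ⟨x * cfc f (star y * y), ?_⟩
  calc y * cfc f (star y * y) = p * x * (q * cfc f (star y * y)) := by rw [hy, mul_assoc]
    _ = p * (x * cfc f (star y * y)) * q := by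
      rw [← (hcomm.cfc_real f).eq]; simp only [mul_assoc]

lemma norm_sub_compression_le {u u' w : B} (hu : ‖u‖ ≤ 1) (hw : ‖w‖ ≤ 1)
    (h₁ : star u' * w = 0) (h₂ : w * star u' = 0) :
    ‖w - (1 - u * star u) * w * (1 - star u * u)‖ ≤ 3 * ‖u - u'‖ := by
  have hPw : ‖u * star u * w‖ ≤ ‖u - u'‖ := by
    rw [mul_assoc, ← sub_zero (star u * w), ← h₁, ← sub_mul, ← star_sub]
    calc _ ≤ ‖u‖ * (‖star (u - u')‖ * ‖w‖) := (norm_mul_le _ _).trans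
          (mul_le_mul_of_nonneg_left (norm_mul_le _ _) (norm_nonneg _))
      _ ≤ 1 * (‖u - u'‖ * 1) := by rw [norm_star]; gcongr
      _ = ‖u - u'‖ := by ring
  have hwQ : ‖w * (star u * u)‖ ≤ ‖u - u'‖ := by
    rw [← mul_assoc, ← sub_zero (w * star u), ← h₂, ← mul_sub, ← star_sub]
    calc _ ≤ ‖w‖ * ‖star (u - u')‖ * ‖u‖ := (norm_mul_le _ _).trans
          (mul_le_mul_of_nonneg_right (norm_mul_le _ _) (norm_nonneg _))
      _ ≤ 1 * ‖u - u'‖ * 1 := by rw [norm_star]; gcongr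
      _ = ‖u - u'‖ := by ring
  have hP : ‖u * star u‖ ≤ 1 := by
    rw [CStarRing.norm_self_mul_star]; nlinarith [norm_nonneg u]
  have : w - (1 - u * star u) * w * (1 - star u * u) =
      u * star u * w + w * (star u * u) - u * star u * (w * (star u * u)) := by noncomm_ring
  rw [this]
  refine (norm_sub_le _ _).trans ?_
  have := (norm_mul_le (u * star u) (w * (star u * u))).trans
    (mul_le_mul hP hwQ (norm_nonneg _) zero_le_one)
  linarith [norm_add_le (u * star u * w) (w * (star u * u))]

lemma eq_zero_of_orthogonal_of_near_polarIso {a w u' : B} (ha : HasClosedRange a)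
    (hzero : ∀ b : B, (∃ x : B, b = (1 - polarIso a * star (polarIso a)) * x *
      (1 - star (polarIso a) * polarIso a)) → HasClosedRange b → b = 0)
    (hw : IsStarProjection (star w * w)) (h₁ : star u' * w = 0) (h₂ : w * star u' = 0)
    (hnear : ‖polarIso a - u'‖ ≤ 1 / 60) : w = 0 := by
  by_contra hw0
  set y := (1 - polarIso a * star (polarIso a)) * w * (1 - star (polarIso a) * polarIso a)
  have hyw : ‖y - w‖ ≤ 1 / 20 := by
    rw [norm_sub_rev]
    linarith [norm_sub_compression_le (norm_polarIso_le_one ha)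
      (norm_le_one_of_isStarProjection_star_mul_self hw) h₁ h₂]
  have hy : 1 / 4 < ‖y‖ ^ 2 := by
    have := norm_eq_one_of_isStarProjection_star_mul_self hw hw0
    nlinarith [norm_sub_norm_le w y, norm_sub_rev y w]
  have hgap := spectrum_star_mul_self_gap_of_near hw hyw
  obtain ⟨x', hx'⟩ := exists_mul_cfc_eq_corner (p := 1 - polarIso a * star (polarIso a))
    (x := w) (isStarProjection_star_polarIso_mul_polarIso ha).one_sub (ramp (1 / 4) (3 / 4))
  exact mul_cfc_ramp_ne_zero (by norm_num) (by norm_num) hgap hy <|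
    hzero _ ⟨x', hx'⟩ (hasClosedRange_mul_cfc_ramp (by norm_num) (by norm_num) hgap)

/-- The part of `𝐮 x` over the spectrum of `x* x` above `2δ/3`, cut off continuously below
`δ/3`. Unlike `𝐮`, it depends continuously on `x`. -/
noncomputable def polarIsoAbove (δ : ℝ) (x : B) : B :=
  x * cfc (fun t ↦ ramp (δ / 3) (2 * δ / 3) t * invSqrtCutoff (δ / 3) t) (star x * x)

lemma continuous_polarIsoAbove {δ : ℝ} (hδ : 0 < δ) : Continuous (polarIsoAbove (B := B) δ) := by
  have := continuous_invSqrtCutoff (show 0 < δ / 3 by positivity)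
  have := continuous_ramp (δ / 3) (2 * δ / 3)
  exact continuous_id.mul <| Continuous.cfc_of_mem_nhdsSet (s := Set.univ) _ univ_mem
    (continuous_star.mul continuous_id) (fun x ↦ .star_mul_self x) (by fun_prop)

lemma polarIsoAbove_eq_polarIso {x : B} {δ : ℝ} (hδ : 0 < δ) (hgap : HasSpectralGap x δ) :
    polarIsoAbove δ x = polarIso x := by
  rw [polarIso_eq_mul_cfc hδ hgap, polarIsoAbove]
  refine congrArg _ (cfc_congr fun t ht ↦ ?_)
  obtain rfl | ht0 := eq_or_ne t 0
  · simp
  have hδt := hgap.le_of_mem_spectrum ht ht0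
  rw [ramp_of_ge (by linarith) (by linarith), one_mul, invSqrtCutoff_of_le (by linarith),
    invSqrtCutoff_of_le hδt]

lemma polarIso_mul_cfc_ramp {b : B} (hb : HasClosedRange b) {δ : ℝ} (hδ : 0 < δ)
    (hspec : ∀ t ∈ spectrum ℝ (star b * b), t ∉ Set.Ioo (δ / 3) (2 * δ / 3)) :
    polarIso b * cfc (ramp (δ / 3) (2 * δ / 3)) (star b * b) = polarIsoAbove δ b := by
  obtain ⟨δb, hδb, hgap⟩ := (hasClosedRange_iff b).mp hb
  have := continuous_invSqrtCutoff hδb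
  have := continuous_ramp (δ / 3) (2 * δ / 3)
  rw [polarIso_eq_mul_cfc hδb hgap, mul_assoc, ← cfc_mul _ _ _ (by fun_prop) (by fun_prop),
    polarIsoAbove]
  refine congrArg _ (cfc_congr fun t ht ↦ ?_)
  rcases le_or_gt t (δ / 3) with h | h
  · simp [ramp_of_le (show δ / 3 < 2 * δ / 3 by linarith) h]
  have h' : 2 * δ / 3 ≤ t := not_lt.mp fun h' ↦ hspec t ht ⟨h, h'⟩
  rw [ramp_of_ge (by linarith) h', mul_one, one_mul, invSqrtCutoff_of_le h.le,
    invSqrtCutoff_of_le (hgap.le_of_mem_spectrum ht (by linarith))]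

lemma HasSpectralGap.eventually_spectrum_gap {a : B} {δ : ℝ} (hgap : HasSpectralGap a δ)
    (hδ : 0 < δ) :
    ∀ᶠ b in 𝓝 a, ∀ t ∈ spectrum ℝ (star b * b), t ∉ Set.Ioo (δ / 3) (2 * δ / 3) := by
  have hsub : spectrum ℝ (star a * a) ⊆ (Set.Icc (δ / 3) (2 * δ / 3))ᶜ := fun t ht hmem ↦ by
    obtain rfl | ht0 := eq_or_ne t 0
    · linarith [hmem.1]
    · linarith [hmem.2, hgap.le_of_mem_spectrum ht ht0]
  have := (upperHemicontinuous_spectrum ℝ B).upperHemicontinuousAt (star a * a) _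
    (isClosed_Icc.isOpen_compl.mem_nhdsSet.mpr hsub)
  filter_upwards [((continuous_star.mul continuous_id).tendsto a).eventually this]
    with b hb t ht hmem
  exact subset_of_mem_nhdsSet hb ht (Set.Ioo_subset_Icc_self hmem)

lemma eventually_polarIso_eq_polarIsoAbove {a : B} {δ : ℝ} (hδ : 0 < δ)
    (hgap : HasSpectralGap a δ)
    (hzero : ∀ b : B, (∃ x : B, b = (1 - polarIso a * star (polarIso a)) * x *
      (1 - star (polarIso a) * polarIso a)) → HasClosedRange b → b = 0) :
    ∀ᶠ b in 𝓝[{x | HasClosedRange x}] a, polarIso b = polarIsoAbove δ b := by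
  have ha := hgap.hasClosedRange hδ
  have hnear : ∀ᶠ b in 𝓝 a, ‖polarIso a - polarIsoAbove δ b‖ < 1 / 60 := by
    have := (continuous_polarIsoAbove hδ).tendsto a
    rw [polarIsoAbove_eq_polarIso hδ hgap] at this
    filter_upwards [this.eventually (Metric.ball_mem_nhds _ (by norm_num : (0 : ℝ) < 1 / 60))]
      with b hb
    rwa [dist_comm, dist_eq_norm] at hb
  filter_upwards [nhdsWithin_le_nhds ((hgap.eventually_spectrum_gap hδ).and hnear),
    self_mem_nhdsWithin]
    with b ⟨hbspec, hbnear⟩ hb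
  obtain ⟨δb, hδb, hgapb⟩ := (hasClosedRange_iff b).mp hb
  set E := cfc (ramp (δ / 3) (2 * δ / 3)) (star b * b)
  have hE : IsStarProjection E := isStarProjection_cfc (.star_mul_self b)
    (continuous_ramp _ _).continuousOn fun t ht ↦ ramp_eq_zero_or_one (by linarith) (hbspec t ht)
  have hcomm : Commute E (star (polarIso b) * polarIso b) := by
    rw [star_polarIso_mul_polarIso_eq hδb hgapb]
    exact cfc_commute_cfc _ _ _
  obtain ⟨h₁, h₂, hw⟩ :=
    orthogonal_split_of_commute (isStarProjection_star_polarIso_mul_polarIso hb) hE hcomm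
  rw [polarIso_mul_cfc_ramp hb hδ hbspec] at h₁ h₂
  have hw0 := eq_zero_of_orthogonal_of_near_polarIso ha hzero hw h₁ h₂ hbnear.le
  rw [← polarIso_mul_cfc_ramp hb hδ hbspec, ← sub_eq_zero, ← mul_one_sub, hw0]

end Backward

end Unital

/-- **Theorem 8.** Let `a` be a closed range element of a unital C*-algebra `A`,
with left and right defect projections `p₀ = 1 − 𝐮(a)𝐮(a)*` and
`q₀ = 1 − 𝐮(a)*𝐮(a)`.  Then `a` is a continuity point of `𝐮` (as a map on the
set of closed range elements of `A`) if and only if `0` is the only closed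
range element of `p₀ A q₀`. -/
theorem continuousWithinAt_polarIso_iff
    {A : Type*} [CStarAlgebra A] (a : A) (ha : HasClosedRange a)
    (p₀ q₀ : A)
    (hp₀ : p₀ = 1 - polarIso a * star (polarIso a))
    (hq₀ : q₀ = 1 - star (polarIso a) * polarIso a) :
    ContinuousWithinAt (polarIso : A → A) {b : A | HasClosedRange b} a ↔
      ∀ b : A, (∃ x : A, b = p₀ * x * q₀) → HasClosedRange b → b = 0 := by
  subst hp₀ hq₀
  refine ⟨fun hcont b hbx hb ↦ ?_, fun hzero ↦ ?_⟩
  · by_contra hb0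
    obtain ⟨h₁, h₂⟩ := orthogonal_of_mem_corner ha hbx
    exact not_continuousWithinAt_polarIso ha hb hb0 h₁ h₂ hcont
  · obtain ⟨δ, hδ, hgap⟩ := (hasClosedRange_iff a).mp ha
    exact (continuous_polarIsoAbove hδ).continuousWithinAt.congr_of_eventuallyEq
      (eventually_polarIso_eq_polarIsoAbove hδ hgap hzero)
      (polarIsoAbove_eq_polarIso hδ hgap).symm
end
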